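/- arXiv:cs/0410057 — 5 statements merged into one kernel-verified Lean document; each statement's English description precedes it below -/
import Mathlib

section
/- Any set of square roots of distinct prime numbers is linearly independent over the rationals. That is, if p_1, ..., p_n are distinct primes and c_1, ..., c_n are rational numbers with c_1·√p_1 + ... + c_n·√p_n = 0, then c_1 = ... = c_n = 0. -/
/-!
Let `K_S = ℚ(√p : p ∈ S)` for a finite set `S` of primes. By induction on `S`, `√m ∉ K_S` for
every squarefree `m > 1` prime to `S`. For the step `K_{S ∪ {q}} = K_S(√q)`: if `α = a + b√q`
(`a, b ∈ K_S`) has `α² ∈ K_S`, then `2ab√q ∈ K_S`, so `α ∈ K_S` or `α√q ∈ K_S`. Applied to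
`α = √m` this gives `√m ∈ K_S` or `√(mq) ∈ K_S`, both excluded by induction.
A nontrivial relation `∑ cᵢ√pᵢ = 0` would put some `√pᵢ` into the field generated by the others.
-/

open IntermediateField

namespace IntermediateField

variable {F E : Type*} [Field F] [Field E] [Algebra F E] {K : IntermediateField F E} {β : E}

theorem exists_eq_add_mul_of_mem_adjoin_sqrt (hβ : β ^ 2 ∈ K) {x : E} (hx : x ∈ K⟮β⟯) :
    ∃ a ∈ K, ∃ b ∈ K, x = a + b * β := by
  have hβint : IsIntegral K β :=
    IsIntegral.of_pow two_pos (isIntegral_algebraMap (x := (⟨_, hβ⟩ : K)))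
  rw [← mem_toSubalgebra, adjoin_simple_toSubalgebra_of_isAlgebraic hβint.isAlgebraic] at hx
  induction hx using Algebra.adjoin_induction with
  | mem x hx =>
    rw [Set.mem_singleton_iff.mp hx]
    exact ⟨0, zero_mem K, 1, one_mem K, by ring⟩
  | algebraMap r => exact ⟨r, r.2, 0, zero_mem K, by simp⟩
  | add x y _ _ hx hy =>
    obtain ⟨a, ha, b, hb, rfl⟩ := hx
    obtain ⟨a', ha', b', hb', rfl⟩ := hy
    exact ⟨a + a', add_mem ha ha', b + b', add_mem hb hb', by ring⟩
  | mul x y _ _ hx hy =>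
    obtain ⟨a, ha, b, hb, rfl⟩ := hx
    obtain ⟨a', ha', b', hb', rfl⟩ := hy
    exact ⟨a * a' + b * b' * β ^ 2, add_mem (mul_mem ha ha') (mul_mem (mul_mem hb hb') hβ),
      a * b' + b * a', add_mem (mul_mem ha hb') (mul_mem hb ha'), by ring⟩

theorem mem_or_mul_mem_of_mem_adjoin_sqrt [NeZero (2 : E)] (hβ : β ^ 2 ∈ K) {α : E}
    (hα : α ∈ K⟮β⟯) (hα2 : α ^ 2 ∈ K) : α ∈ K ∨ α * β ∈ K := by
  obtain ⟨a, ha, b, hb, rfl⟩ := exists_eq_add_mul_of_mem_adjoin_sqrt hβ hα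
  by_cases ha0 : a = 0
  · subst ha0
    right
    rw [zero_add, mul_assoc, ← sq]
    exact mul_mem hb hβ
  by_cases hb0 : b = 0
  · subst hb0
    simpa using Or.inl ha
  have hβK : β ∈ K := by
    have h2ab : 2 * a * b ≠ 0 := mul_ne_zero (mul_ne_zero two_ne_zero ha0) hb0
    have hβ_eq : β = ((a + b * β) ^ 2 - a ^ 2 - b ^ 2 * β ^ 2) / (2 * a * b) := by
      field_simp
      ring
    rw [hβ_eq]
    exact div_mem (sub_mem (sub_mem hα2 (pow_mem ha 2)) (mul_mem (pow_mem hb 2) hβ))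
      (mul_mem (mul_mem (ofNat_mem K 2) ha) hb)
  exact Or.inl (add_mem ha (mul_mem hb hβK))

end IntermediateField

theorem Nat.not_isSquare_of_squarefree {m : ℕ} (hm : Squarefree m) (hm1 : m ≠ 1) :
    ¬IsSquare m := by
  rintro ⟨k, rfl⟩
  exact hm1 (by simp [Nat.isUnit_iff.mp (hm k dvd_rfl)])

noncomputable def sqrtField (S : Finset ℕ) : IntermediateField ℚ ℝ :=
  adjoin ℚ ((fun n : ℕ => √(n : ℝ)) '' S)

theorem sqrt_mem_sqrtField {S : Finset ℕ} {n : ℕ} (hn : n ∈ S) : √(n : ℝ) ∈ sqrtField S :=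
  subset_adjoin ℚ _ ⟨n, hn, rfl⟩

theorem sqrtField_insert (q : ℕ) (S : Finset ℕ) :
    sqrtField (insert q S) = ((sqrtField S)⟮√(q : ℝ)⟯).restrictScalars ℚ := by
  -- not a plain `rw`: the two sides carry different (defeq) `Algebra ℚ (sqrtField S)` instances
  refine Eq.trans ?_ (restrictScalars_adjoin ℚ (sqrtField S) {√(q : ℝ)}).symm
  rw [Set.union_singleton, sqrtField, sqrtField, adjoin_insert_adjoin, Finset.coe_insert,
    Set.image_insert_eq]

theorem sqrt_notMem_sqrtField {S : Finset ℕ} (hS : ∀ p ∈ S, p.Prime) {m : ℕ}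
    (hm : Squarefree m) (hm1 : m ≠ 1) (hmS : ∀ p ∈ S, ¬p ∣ m) : √(m : ℝ) ∉ sqrtField S := by
  induction S using Finset.induction_on generalizing m with
  | empty =>
    have hirr : Irrational √(m : ℝ) :=
      irrational_sqrt_natCast_iff.mpr (Nat.not_isSquare_of_squarefree hm hm1)
    rwa [sqrtField, Finset.coe_empty, Set.image_empty, adjoin_empty, mem_bot]
  | @insert q S hqS ih =>
    have hq : q.Prime := hS q (Finset.mem_insert_self q S)
    have hS' : ∀ p ∈ S, p.Prime := fun p hp => hS p (Finset.mem_insert_of_mem hp)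
    have hmS' : ∀ p ∈ S, ¬p ∣ m := fun p hp => hmS p (Finset.mem_insert_of_mem hp)
    have hqm : ¬q ∣ m := hmS q (Finset.mem_insert_self q S)
    intro hmem
    rcases mem_or_mul_mem_of_mem_adjoin_sqrt (K := sqrtField S) (by simp)
      (sqrtField_insert q S ▸ hmem) (by simp) with hmK | hmqK
    · exact ih hS' hm hm1 hmS' hmK
    · refine ih hS' (m := m * q) ?_ ?_ ?_ (by rwa [Nat.cast_mul, Real.sqrt_mul (Nat.cast_nonneg _)])
      · exact Nat.squarefree_mul_iff.mpr ⟨(hq.coprime_iff_not_dvd.mpr hqm).symm, hm, hq.squarefree⟩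
      · simp [hq.ne_one]
      · intro p hp hpmq
        rcases (hS' p hp).dvd_mul.mp hpmq with hpm | hpq
        · exact hmS' p hp hpm
        · exact hqS ((Nat.prime_dvd_prime_iff_eq (hS' p hp) hq).mp hpq ▸ hp)

theorem sqrt_prime_notMem_sqrtField {S : Finset ℕ} (hS : ∀ p ∈ S, p.Prime) {q : ℕ}
    (hq : q.Prime) (hqS : q ∉ S) : √(q : ℝ) ∉ sqrtField S :=
  sqrt_notMem_sqrtField hS hq.squarefree hq.ne_one fun p hp hpq =>
    hqS ((Nat.prime_dvd_prime_iff_eq (hS p hp) hq).mp hpq ▸ hp)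

theorem sqrt_primes_rationally_independent
    (n : ℕ) (p : Fin n → ℕ) (hp : ∀ i, (p i).Prime)
    (hinj : Function.Injective p) (c : Fin n → ℚ)
    (h : ∑ i, (c i : ℝ) * Real.sqrt (p i) = 0) :
    ∀ i, c i = 0 := by
  intro i
  by_contra hci
  set others := Finset.univ.erase i
  have hrest : ∑ j ∈ others, (c j : ℝ) * √(p j : ℝ) ∈ sqrtField (others.image p) :=
    sum_mem fun j hj =>
      mul_mem (SubfieldClass.ratCast_mem _ _) (sqrt_mem_sqrtField (Finset.mem_image_of_mem p hj))
  have hpi : √(p i : ℝ) = ((-(c i)⁻¹ : ℚ) : ℝ) * ∑ j ∈ others, (c j : ℝ) * √(p j : ℝ) := by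
    rw [← Finset.add_sum_erase _ _ (Finset.mem_univ i)] at h
    have hci' : (c i : ℝ) ≠ 0 := by exact_mod_cast hci
    push_cast
    field_simp
    linarith
  exact sqrt_prime_notMem_sqrtField (Finset.forall_mem_image.mpr fun j _ => hp j) (hp i)
    (hinj.mem_finset_image.not.mpr (Finset.notMem_erase i _))
    (hpi ▸ mul_mem (SubfieldClass.ratCast_mem _ _) hrest)
end

section
/- Let p_1, ..., p_{k-1} be distinct primes and l_1, ..., l_{k-1} positive integers. For nonnegative integers n_0, n_1, ..., n_{k-1}, the equation (l_1·√p_1 + ... + l_{k-1}·√p_{k-1})·n_0 = n_1·√p_1 + ... + n_{k-1}·√p_{k-1} holds if and only if n_i = l_i·n_0 for all 1 ≤ i ≤ k-1. -/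
/-!
Linear independence of `√p₁, …, √pₖ` over `ℚ` reduces the equation to comparing coefficients.
It is proved by adjoining the square roots one prime at a time, keeping the invariant that the
field reached contains no `√m` for a nonsquare `m` prime to the primes used so far. In the step
`F ↦ F(√q)`, squaring `√m = a + b√q` puts `2ab√q` in `F`, so `a = 0` or `b = 0`; `b = 0` means
`√m ∈ F`, and `a = 0` means `√(mq) = bq ∈ F`, both excluded by the invariant.
-/

open Real

namespace Subfield

variable {K : Type*} [Field K]

def adjoinSqrt (F : Subfield K) (r : K) (hr2 : r ^ 2 ∈ F) (hr : r ∉ F) : Subfield K where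
  carrier := {x | ∃ a ∈ F, ∃ b ∈ F, a + b * r = x}
  zero_mem' := ⟨0, F.zero_mem, 0, F.zero_mem, by ring⟩
  one_mem' := ⟨1, F.one_mem, 0, F.zero_mem, by ring⟩
  add_mem' := by
    rintro _ _ ⟨a, ha, b, hb, rfl⟩ ⟨c, hc, d, hd, rfl⟩
    exact ⟨a + c, F.add_mem ha hc, b + d, F.add_mem hb hd, by ring⟩
  mul_mem' := by
    rintro _ _ ⟨a, ha, b, hb, rfl⟩ ⟨c, hc, d, hd, rfl⟩
    exact ⟨a * c + b * d * r ^ 2, F.add_mem (F.mul_mem ha hc) (F.mul_mem (F.mul_mem hb hd) hr2),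
      a * d + b * c, F.add_mem (F.mul_mem ha hd) (F.mul_mem hb hc), by ring⟩
  neg_mem' := by
    rintro _ ⟨a, ha, b, hb, rfl⟩
    exact ⟨-a, F.neg_mem ha, -b, F.neg_mem hb, by ring⟩
  inv_mem' := by
    rintro _ ⟨a, ha, b, hb, rfl⟩
    by_cases hx : a + b * r = 0
    · exact ⟨0, F.zero_mem, 0, F.zero_mem, by simp [hx]⟩
    have hconj : a - b * r ≠ 0 := by
      intro hconj
      rcases eq_or_ne b 0 with rfl | hb0
      · exact hx (by simpa using hconj)
      · have : r = a / b := by rw [eq_div_iff hb0]; linear_combination -hconj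
        exact hr (this ▸ F.div_mem ha hb)
    have hD : a ^ 2 - b ^ 2 * r ^ 2 ∈ F :=
      F.sub_mem (F.pow_mem ha 2) (F.mul_mem (F.pow_mem hb 2) hr2)
    refine ⟨a / (a ^ 2 - b ^ 2 * r ^ 2), F.div_mem ha hD, -b / (a ^ 2 - b ^ 2 * r ^ 2),
      F.div_mem (F.neg_mem hb) hD, ?_⟩
    have hfac : a ^ 2 - b ^ 2 * r ^ 2 = (a + b * r) * (a - b * r) := by ring
    rw [hfac]
    field_simp
    ring

theorem mul_eq_zero_of_add_mul_eq_of_sq_mem [NeZero (2 : K)] {F : Subfield K} {r s a b : K}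
    (ha : a ∈ F) (hb : b ∈ F) (hr : r ∉ F) (hr2 : r ^ 2 ∈ F) (hs2 : s ^ 2 ∈ F)
    (h : a + b * r = s) : a * b = 0 := by
  by_contra hab
  obtain ⟨ha0, hb0⟩ := mul_ne_zero_iff.mp hab
  have : r = (s ^ 2 - a ^ 2 - b ^ 2 * r ^ 2) / (2 * (a * b)) := by
    rw [← h]; field_simp; ring
  refine hr (this ▸ F.div_mem ?_ (F.mul_mem (ofNat_mem F 2) (F.mul_mem ha hb)))
  exact F.sub_mem (F.sub_mem hs2 (F.pow_mem ha 2)) (F.mul_mem (F.pow_mem hb 2) hr2)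

end Subfield

theorem Nat.Prime.not_isSquare_mul {q m : ℕ} (hq : q.Prime) (hm : ¬ q ∣ m) :
    ¬ IsSquare (m * q) := by
  rintro ⟨t, ht⟩
  obtain ⟨u, rfl⟩ := hq.dvd_mul.mp (ht ▸ dvd_mul_left q m) |>.elim id id
  refine hm ⟨u * u, Nat.eq_of_mul_eq_mul_right hq.pos ?_⟩
  rw [ht]; ring

theorem exists_subfield_sqrt_mem_and_sqrt_notMem (s : Finset ℕ) (hs : ∀ q ∈ s, q.Prime) :
    ∃ F : Subfield ℝ, (∀ q ∈ s, √(q : ℝ) ∈ F) ∧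
      ∀ m : ℕ, ¬ IsSquare m → (∀ q ∈ s, ¬ q ∣ m) → √(m : ℝ) ∉ F := by
  induction s using Finset.induction_on with
  | empty =>
    refine ⟨(Rat.castHom ℝ).fieldRange, by simp, fun m hm _ hmem => ?_⟩
    obtain ⟨x, hx⟩ := RingHom.mem_fieldRange.mp hmem
    exact irrational_sqrt_natCast_iff.mpr hm ⟨x, hx⟩
  | insert q s hqs ih =>
    have hq : q.Prime := hs q (Finset.mem_insert_self q s)
    obtain ⟨F, hsF, hF⟩ := ih fun p hp => hs p (Finset.mem_insert_of_mem hp)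
    have hq_dvd : ∀ p ∈ s, ¬ p ∣ q := fun p hp hpq =>
      hqs <| (Nat.prime_dvd_prime_iff_eq (hs p (Finset.mem_insert_of_mem hp)) hq).mp hpq ▸ hp
    have hqF : √(q : ℝ) ∉ F := hF q hq.not_isSquare hq_dvd
    have hq2 : √(q : ℝ) ^ 2 ∈ F := by
      rw [sq_sqrt (Nat.cast_nonneg q)]; exact natCast_mem F q
    refine ⟨F.adjoinSqrt _ hq2 hqF, ?_, ?_⟩
    · simp only [Finset.mem_insert, forall_eq_or_imp]
      exact ⟨⟨0, F.zero_mem, 1, F.one_mem, by ring⟩,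
        fun p hp => ⟨_, hsF p hp, 0, F.zero_mem, by ring⟩⟩
    · rintro m hm hdvd ⟨a, ha, b, hb, hab⟩
      simp only [Finset.mem_insert, forall_eq_or_imp] at hdvd
      have hm2 : √(m : ℝ) ^ 2 ∈ F := by
        rw [sq_sqrt (Nat.cast_nonneg m)]; exact natCast_mem F m
      rcases mul_eq_zero.mp (Subfield.mul_eq_zero_of_add_mul_eq_of_sq_mem ha hb hqF hq2 hm2 hab)
        with rfl | rfl
      · refine hF (m * q) (hq.not_isSquare_mul hdvd.1) (fun p hp hpd => ?_) ?_
        · rcases (hs p (Finset.mem_insert_of_mem hp)).dvd_mul.mp hpd with h | h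
          · exact hdvd.2 p hp h
          · exact hq_dvd p hp h
        · have : √((m * q : ℕ) : ℝ) = b * q := by
            rw [Nat.cast_mul, sqrt_mul (Nat.cast_nonneg m), ← hab, zero_add, mul_assoc,
              mul_self_sqrt (Nat.cast_nonneg q)]
          exact this ▸ F.mul_mem hb (natCast_mem F q)
      · exact hF m hm hdvd.2 (by rwa [← hab, zero_mul, add_zero])

theorem linearIndependent_sqrt_prime {ι : Type*} {p : ι → ℕ} (hp : ∀ i, (p i).Prime)
    (hinj : Function.Injective p) : LinearIndependent ℚ fun i => √(p i : ℝ) := by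
  classical
  rw [linearIndependent_iff']
  intro s c hc j hj
  by_contra hcj
  obtain ⟨F, hsF, hF⟩ :=
    exists_subfield_sqrt_mem_and_sqrt_notMem ((s.erase j).image p)
      (by simp only [Finset.forall_mem_image]; exact fun i _ => hp i)
  refine hF (p j) (hp j).not_isSquare ?_ ?_
  · simp only [Finset.mem_image, Finset.mem_erase, forall_exists_index, and_imp]
    rintro _ i hij - rfl hdvd
    exact hij (hinj ((Nat.prime_dvd_prime_iff_eq (hp i) (hp j)).mp hdvd))
  · have hcj_eq : c j • √(p j : ℝ) = -∑ i ∈ s.erase j, c i • √(p i : ℝ) :=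
      eq_neg_of_add_eq_zero_left ((Finset.add_sum_erase s _ hj).trans hc)
    rw [← inv_smul_smul₀ hcj √(p j : ℝ), hcj_eq]
    refine SubfieldClass.qsmul_mem F _ (F.neg_mem (sum_mem fun i hi => ?_))
    exact SubfieldClass.qsmul_mem F _ (hsF _ (Finset.mem_image_of_mem p hi))

theorem counter_zero_iff_in_Lgen_general
    (k : ℕ) (p : Fin k → ℕ) (hp : ∀ i, (p i).Prime)
    (hinj : Function.Injective p)
    (l : Fin k → ℕ)
    (n₀ : ℕ) (n : Fin k → ℕ) :
    (∑ i, (l i : ℝ) * Real.sqrt (p i)) * n₀ = ∑ i, (n i : ℝ) * Real.sqrt (p i)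
      ↔ ∀ i, n i = l i * n₀ := by
  have hindep := Fintype.linearIndependent_iffₛ.mp
    ((linearIndependent_sqrt_prime hp hinj).restrict_scalars' ℕ)
  simp only [nsmul_eq_mul] at hindep
  constructor
  · intro h i
    refine (hindep (fun i => l i * n₀) n ?_ i).symm
    simpa [Finset.sum_mul, mul_right_comm] using h
  · intro h
    simp [h, Finset.sum_mul, mul_right_comm]

theorem counter_zero_iff_in_Lgen
    (k : ℕ) (p : Fin k → ℕ) (hp : ∀ i, (p i).Prime)
    (hinj : Function.Injective p)
    (l : Fin k → ℕ) (hl : ∀ i, 0 < l i)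
    (n₀ : ℕ) (n : Fin k → ℕ) :
    (∑ i, (l i : ℝ) * Real.sqrt (p i)) * n₀ = ∑ i, (n i : ℝ) * Real.sqrt (p i)
      ↔ ∀ i, n i = l i * n₀ :=
  counter_zero_iff_in_Lgen_general k p hp hinj l n₀ n
end

section
/- Let A = [[4,3,0],[-3,4,0],[0,0,5]] and B = [[4,0,3],[0,5,0],[-3,0,4]] as rational 3×3 matrices. For any n ≥ 0 and any sequences X_1,...,X_n and Y_1,...,Y_n with each X_j, Y_j ∈ {A,B}, let u = Y_1⁻¹·...·Y_n⁻¹·X_n·...·X_1·(1,0,0)ᵀ. Then u[2]² + u[3]² = 0 if and only if X_j = Y_j for all 1 ≤ j ≤ n. -/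
/-!
Both generators satisfy `Mᵀ * M = 25 • 1`, so a word of length `n` multiplies squared norms by
`25 ^ n`. If `u 1 = u 2 = 0`, then `Xₙ ⋯ X₁ e₁ = c • Yₙ ⋯ Y₁ e₁` with `c ^ 2 = 1`, an identity
between integer vectors. Modulo 5 each generator becomes a rank-one map whose image line
identifies it and whose kernel contains neither image line nor `e₁`; so the reduction of the
vector of a nonempty word is a nonzero point on the line of its last letter, which must therefore
be the same on both sides. Cancelling that letter (injective, again by `Mᵀ * M = 25 • 1`) and
inducting on the length gives `X = Y`.
-/

namespace Matrix

variable {n R : Type*} [Fintype n] [DecidableEq n] [CommRing R] {M : Matrix n n R} {r : R}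

theorem mulVec_dotProduct_mulVec_of_transpose_mul_self (h : Mᵀ * M = r • 1)
    (v : n → R) : (M *ᵥ v) ⬝ᵥ (M *ᵥ v) = r * (v ⬝ᵥ v) := by
  rw [dotProduct_mulVec, vecMul_mulVec, h, vecMul_smul, vecMul_one, smul_dotProduct, smul_eq_mul]

theorem mulVec_injective_of_transpose_mul_self [IsDomain R] (h : Mᵀ * M = r • 1)
    (hr : r ≠ 0) : Function.Injective (M *ᵥ ·) := by
  intro v w hvw
  have : (Mᵀ * M) *ᵥ v = (Mᵀ * M) *ᵥ w := by
    simp only [← mulVec_mulVec, hvw]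
  rw [h, smul_mulVec, smul_mulVec, one_mulVec, one_mulVec] at this
  exact smul_right_injective _ hr this

end Matrix

namespace AmbainisWatrous

open Matrix

variable (R : Type*) [CommRing R]

def gen (b : Bool) : Matrix (Fin 3) (Fin 3) R :=
  if b then !![4, 3, 0; -3, 4, 0; 0, 0, 5] else !![4, 0, 3; 0, 5, 0; -3, 0, 4]

-- The head of `w` is the letter applied last.
def wordMat (w : List Bool) : Matrix (Fin 3) (Fin 3) R := (w.map (gen R)).prod

def wordVec (w : List Bool) : Fin 3 → R := wordMat R w *ᵥ ![1, 0, 0]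

variable {R}

theorem transpose_gen_mul_gen (b : Bool) : (gen R b)ᵀ * gen R b = (25 : R) • 1 := by
  cases b <;> ext i j <;> fin_cases i <;> fin_cases j <;>
    simp [gen, mul_apply, Fin.sum_univ_three, one_apply] <;> norm_num

theorem wordVec_nil : wordVec R [] = ![1, 0, 0] := by
  simp [wordVec, wordMat]

theorem wordVec_cons (b : Bool) (w : List Bool) :
    wordVec R (b :: w) = gen R b *ᵥ wordVec R w := by
  simp [wordVec, wordMat, mulVec_mulVec]

theorem wordVec_dotProduct_self (w : List Bool) :
    wordVec R w ⬝ᵥ wordVec R w = 25 ^ w.length := by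
  induction w with
  | nil => simp [wordVec_nil]
  | cons b w ih =>
    rw [wordVec_cons, mulVec_dotProduct_mulVec_of_transpose_mul_self (transpose_gen_mul_gen b),
      ih, List.length_cons, pow_succ']

theorem gen_map {S : Type*} [CommRing S] (f : R →+* S) (b : Bool) :
    (gen R b).map f = gen S b := by
  cases b <;> ext i j <;> fin_cases i <;> fin_cases j <;> simp [gen, map_ofNat]

theorem map_wordVec {S : Type*} [CommRing S] (f : R →+* S) (w : List Bool) :
    f ∘ wordVec R w = wordVec S w := by
  induction w with
  | nil => ext i; fin_cases i <;> simp [wordVec_nil]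
  | cons b w ih =>
    ext i
    rw [wordVec_cons, wordVec_cons, Function.comp_apply, RingHom.map_mulVec, gen_map, ih]

def line (b : Bool) : Fin 3 → ZMod 5 := if b then ![1, 3, 0] else ![1, 0, 3]

def coline (b : Bool) : Fin 3 → ZMod 5 := if b then ![4, 3, 0] else ![4, 0, 3]

theorem gen_zmod_five (b : Bool) : gen (ZMod 5) b = vecMulVec (line b) (coline b) := by
  cases b <;> decide

theorem wordVec_zmod_five_cons (b : Bool) (w : List Bool) :
    wordVec (ZMod 5) (b :: w) = (coline b ⬝ᵥ wordVec (ZMod 5) w) • line b := by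
  rw [wordVec_cons, gen_zmod_five, vecMulVec_mulVec, op_smul_eq_smul]

theorem coline_dotProduct_wordVec_ne_zero (b : Bool) (w : List Bool) :
    coline b ⬝ᵥ wordVec (ZMod 5) w ≠ 0 := by
  have : Fact (Nat.Prime 5) := ⟨by norm_num⟩
  induction w generalizing b with
  | nil => cases b <;> decide
  | cons b' w ih =>
    rw [wordVec_zmod_five_cons, dotProduct_smul, smul_eq_mul]
    exact mul_ne_zero (ih b') (by cases b <;> cases b' <;> decide)

theorem eq_of_smul_line_eq_smul_line {x y : Bool} {s t : ZMod 5} (hs : s ≠ 0)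
    (h : s • line x = t • line y) : x = y := by
  revert s t; cases x <;> cases y <;> decide

theorem eq_of_wordVec_eq_smul {lx ly : List Bool} (hlen : lx.length = ly.length) {c : ℤ}
    (h : wordVec ℤ lx = c • wordVec ℤ ly) : lx = ly := by
  induction lx generalizing ly with
  | nil => exact (List.length_eq_zero_iff.mp hlen.symm).symm
  | cons x lx ih =>
    obtain _ | ⟨y, ly⟩ := ly
    · simp at hlen
    have hmod : wordVec (ZMod 5) (x :: lx) = (c : ZMod 5) • wordVec (ZMod 5) (y :: ly) := by
      rw [← map_wordVec (Int.castRingHom _) (x :: lx), ← map_wordVec (Int.castRingHom _) (y :: ly),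
        h]
      ext i; simp
    rw [wordVec_zmod_five_cons, wordVec_zmod_five_cons, smul_smul] at hmod
    obtain rfl := eq_of_smul_line_eq_smul_line (coline_dotProduct_wordVec_ne_zero x lx) hmod
    rw [wordVec_cons, wordVec_cons, ← mulVec_smul] at h
    exact congrArg (x :: ·) <| ih (Nat.succ_injective hlen)
      (mulVec_injective_of_transpose_mul_self (transpose_gen_mul_gen x) (by norm_num) h)

theorem exists_gen_eq {M : Matrix (Fin 3) (Fin 3) R}
    (h : M = !![4, 3, 0; -3, 4, 0; 0, 0, 5] ∨ M = !![4, 0, 3; 0, 5, 0; -3, 0, 4]) :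
    ∃ b, M = gen R b :=
  h.elim (⟨true, ·⟩) (⟨false, ·⟩)

theorem gen_rat_injective : Function.Injective (gen ℚ) := by
  intro x y h
  have := congrFun (congrFun h 1) 1
  cases x <;> cases y <;> simp_all [gen]

theorem wordMat_reverse_ofFn {n : ℕ} (b : Fin n → Bool) :
    wordMat R (List.ofFn b).reverse = (List.ofFn fun j => gen R (b j)).reverse.prod := by
  simp [wordMat, List.map_reverse, List.map_ofFn, Function.comp_def]

theorem isUnit_det_wordMat_rat (w : List Bool) : IsUnit (wordMat ℚ w).det := by
  refine (isUnit_iff_isUnit_det _).mp (List.prod_isUnit fun M hM => ?_)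
  obtain ⟨b, -, rfl⟩ := List.mem_map.mp hM
  rw [isUnit_iff_isUnit_det, isUnit_iff_ne_zero]
  cases b <;> simp [gen, det_fin_three] <;> norm_num

theorem eq_of_wordVec_rat_eq_smul {lx ly : List Bool} (hlen : lx.length = ly.length) {c : ℚ}
    (h : wordVec ℚ lx = c • wordVec ℚ ly) : lx = ly := by
  have hc : c * c = 1 := by
    have hnorm := congrArg (fun v => v ⬝ᵥ v) h
    simp only [smul_dotProduct, dotProduct_smul, wordVec_dotProduct_self, hlen,
      smul_eq_mul] at hnorm
    exact mul_right_cancel₀ (pow_ne_zero _ (by norm_num : (25 : ℚ) ≠ 0)) (by linarith)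
  obtain ⟨k, rfl⟩ : ∃ k : ℤ, (k : ℚ) = c := by
    rcases mul_self_eq_one_iff.mp hc with rfl | rfl
    exacts [⟨1, by simp⟩, ⟨-1, by simp⟩]
  refine eq_of_wordVec_eq_smul hlen (c := k) (funext fun i => ?_)
  have hi := congrFun h i
  rw [← map_wordVec (Int.castRingHom ℚ) lx, ← map_wordVec (Int.castRingHom ℚ) ly] at hi
  simp only [Function.comp_apply, Pi.smul_apply, smul_eq_mul, eq_intCast] at hi
  exact_mod_cast hi

theorem inv_wordMat_mulVec_wordVec_tail_eq_zero_iff {lx ly : List Bool}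
    (hlen : lx.length = ly.length) {u : Fin 3 → ℚ} (hu : u = (wordMat ℚ ly)⁻¹ *ᵥ wordVec ℚ lx) :
    u 1 = 0 ∧ u 2 = 0 ↔ lx = ly := by
  have hdet := isUnit_det_wordMat_rat ly
  constructor
  · rintro ⟨h1, h2⟩
    obtain ⟨c, hc⟩ : ∃ c : ℚ, u = c • ![1, 0, 0] :=
      ⟨u 0, by ext i; fin_cases i <;> simp [h1, h2]⟩
    refine eq_of_wordVec_rat_eq_smul hlen (c := c) ?_
    calc wordVec ℚ lx = wordMat ℚ ly *ᵥ u := by simp [hu, mulVec_mulVec, mul_nonsing_inv _ hdet]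
      _ = c • wordVec ℚ ly := by rw [hc, mulVec_smul, wordVec]
  · rintro rfl
    simp [hu, wordVec, mulVec_mulVec, nonsing_inv_mul _ hdet]

end AmbainisWatrous

open AmbainisWatrous Matrix

theorem ambainis_watrous
    (n : ℕ) (X Y : Fin n → Matrix (Fin 3) (Fin 3) ℚ)
    (A : Matrix (Fin 3) (Fin 3) ℚ) (B : Matrix (Fin 3) (Fin 3) ℚ)
    (hA : A = !![4, 3, 0; -3, 4, 0; 0, 0, 5])
    (hB : B = !![4, 0, 3; 0, 5, 0; -3, 0, 4])
    (hX : ∀ j, X j = A ∨ X j = B) (hY : ∀ j, Y j = A ∨ Y j = B) :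
    let u : Fin 3 → ℚ :=
      ((List.ofFn fun j => (Y j)⁻¹).prod *
        (List.ofFn fun j => X j).reverse.prod).mulVec ![1, 0, 0]
    u 1 ^ 2 + u 2 ^ 2 = 0 ↔ ∀ j, X j = Y j := by
  intro u
  subst hA hB
  choose bX hbX using fun j => exists_gen_eq (hX j)
  choose bY hbY using fun j => exists_gen_eq (hY j)
  obtain rfl : X = fun j => gen ℚ (bX j) := funext hbX
  obtain rfl : Y = fun j => gen ℚ (bY j) := funext hbY
  have hu : u = (wordMat ℚ (List.ofFn bY).reverse)⁻¹ *ᵥ wordVec ℚ (List.ofFn bX).reverse := by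
    rw [wordVec, mulVec_mulVec, wordMat_reverse_ofFn, wordMat_reverse_ofFn, list_prod_inv_reverse,
      List.reverse_reverse, List.map_ofFn]
    rfl
  rw [sq, sq, mul_self_add_mul_self_eq_zero,
    inv_wordMat_mulVec_wordVec_tail_eq_zero_iff (by simp) hu, List.reverse_inj, List.ofFn_inj,
    funext_iff]
  simp only [gen_rat_injective.eq_iff]
end

section
/- Let Σ be a finite alphabet and let c : Σ* → ℝ be a counter-value function of a one-way real-counter machine, i.e., there is a DFA-like structure with states Q, transition δ : Q × Σ → Q, and increment function g : Q × Σ → ℝ taking values in a finite set, with c(x) the sum of increments along the run on x from the initial state. If the set {c(x) : x ∈ Σ*} is bounded above, then it is finite. -/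
/-!
A loop of the automaton, a word `w` leading a reachable state `q` back to `q`, can be pumped:
reading `w` `n` times adds `n` times its gain to the counter. Nonnegativity of the counter
rules out a negative gain and boundedness a positive one, so every loop has gain zero. Cutting
loops out of a word therefore does not change its counter value, so every value is attained by
a word shorter than the number of states, and there are finitely many of those.
-/

/-- Counter value after running on a string from state `q`: the sum of the
increments `g` along the run determined by transition function `δ`. -/
def counterVal {σ Q : Type*} (δ : Q → σ → Q) (g : Q → σ → ℝ) : Q → List σ → ℝ
  | _, [] => 0
  | q, a :: x => g q a + counterVal δ g (δ q a) x

theorem eq_zero_of_forall_add_nat_mul_mem_Icc {K : Type*} [Field K] [LinearOrder K]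
    [IsStrictOrderedRing K] [Archimedean K] {a c M : K}
    (h : ∀ n : ℕ, a + n * c ∈ Set.Icc 0 M) : c = 0 := by
  rcases lt_trichotomy c 0 with hneg | hzero | hpos
  · obtain ⟨n, hn⟩ := exists_nat_gt (a / -c)
    rw [div_lt_iff₀ (neg_pos.2 hneg)] at hn
    linarith [(h n).1]
  · exact hzero
  · obtain ⟨n, hn⟩ := exists_nat_gt ((M - a) / c)
    rw [div_lt_iff₀ hpos] at hn
    linarith [(h n).2]

section CounterVal

variable {σ Q : Type*} (δ : Q → σ → Q) (g : Q → σ → ℝ)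

theorem counterVal_append (q : Q) (x y : List σ) :
    counterVal δ g q (x ++ y) = counterVal δ g q x + counterVal δ g (x.foldl δ q) y := by
  induction x generalizing q with
  | nil => simp [counterVal]
  | cons a x ih => simp only [List.cons_append, counterVal, ih, List.foldl_cons]; ring

theorem counterVal_flatten_replicate {q : Q} {w : List σ} (hw : w.foldl δ q = q) (n : ℕ) :
    counterVal δ g q (List.replicate n w).flatten = n * counterVal δ g q w := by
  induction n with
  | zero => simp [counterVal]
  | succ n ih =>
    rw [List.replicate_succ, List.flatten_cons, counterVal_append, hw, ih]
    push_cast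
    ring

theorem counterVal_loop_eq_zero {q₀ : Q} (hnonneg : ∀ x, 0 ≤ counterVal δ g q₀ x)
    (hbdd : BddAbove (Set.range (counterVal δ g q₀))) {u w : List σ}
    (hw : w.foldl δ (u.foldl δ q₀) = u.foldl δ q₀) :
    counterVal δ g (u.foldl δ q₀) w = 0 := by
  obtain ⟨M, hM⟩ := hbdd
  refine eq_zero_of_forall_add_nat_mul_mem_Icc (a := counterVal δ g q₀ u) (M := M) fun n => ?_
  have hpump := counterVal_append δ g q₀ u (List.replicate n w).flatten
  rw [counterVal_flatten_replicate δ g hw] at hpump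
  exact hpump ▸ ⟨hnonneg _, hM ⟨_, rfl⟩⟩

theorem exists_length_lt_card_counterVal_eq [Fintype Q] {q₀ : Q}
    (hloop : ∀ u w : List σ, w.foldl δ (u.foldl δ q₀) = u.foldl δ q₀ →
      counterVal δ g (u.foldl δ q₀) w = 0) (x : List σ) :
    ∃ y : List σ, y.length < Fintype.card Q ∧ counterVal δ g q₀ y = counterVal δ g q₀ x := by
  induction hn : x.length using Nat.strong_induction_on generalizing x with
  | _ n ih =>
  by_cases hx : x.length < Fintype.card Q
  · exact ⟨x, hx, rfl⟩
  -- `evalFrom` of this automaton is `List.foldl δ`; its start and accepting states play no role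
  obtain ⟨_, u, w, z, rfl, -, hw, rfl, hwu, -⟩ :=
    (DFA.mk δ q₀ ∅).evalFrom_split (s := q₀) (not_lt.1 hx) rfl
  change w.foldl δ (u.foldl δ q₀) = u.foldl δ q₀ at hwu
  have hcut : counterVal δ g q₀ (u ++ w ++ z) = counterVal δ g q₀ (u ++ z) := by
    rw [counterVal_append, counterVal_append, List.foldl_append, hwu, counterVal_append,
      hloop u w hwu, add_zero]
  obtain ⟨y, hy, hyx⟩ :=
    ih (u ++ z).length (by simp [← hn, List.length_pos_iff.2 hw]) (u ++ z) rfl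
  exact ⟨y, hy, hyx.trans hcut.symm⟩

end CounterVal

theorem bounded_counter_values_finite_general
    (σ Q : Type*) [Fintype σ] [Fintype Q]
    (δ : Q → σ → Q) (g : Q → σ → ℝ) (q₀ : Q)
    (hnonneg : ∀ x : List σ, 0 ≤ counterVal δ g q₀ x)
    (hbdd : BddAbove (Set.range (counterVal δ g q₀))) :
    (Set.range (counterVal δ g q₀)).Finite := by
  refine ((List.finite_length_lt σ (Fintype.card Q)).image (counterVal δ g q₀)).subset ?_
  rintro _ ⟨x, rfl⟩
  exact exists_length_lt_card_counterVal_eq δ g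
    (fun _ _ => counterVal_loop_eq_zero δ g hnonneg hbdd) x

theorem bounded_counter_values_finite
    (σ Q : Type*) [Fintype σ] [Fintype Q]
    (δ : Q → σ → Q) (g : Q → σ → ℝ) (q₀ : Q)
    (k : ℕ) (p : Fin k → ℕ) (hp : ∀ i, (p i).Prime) (hinj : Function.Injective p)
    (hg : ∀ q a, ∃ i, g q a = Real.sqrt (p i) ∨ g q a = -Real.sqrt (p i))
    (hnonneg : ∀ x : List σ, 0 ≤ counterVal δ g q₀ x)
    (hbdd : BddAbove (Set.range (counterVal δ g q₀))) :
    (Set.range (counterVal δ g q₀)).Finite :=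
  bounded_counter_values_finite_general σ Q δ g q₀ hnonneg hbdd
end

section
/- Let M be a one-way partially blind deterministic automaton with a real counter whose reachable counter values are bounded above by some real α. Then the language recognized by M is regular. -/
/-- A one-way partially blind deterministic automaton with a real counter
`C_ℝ(k) = (ℝ, {√p₁,…,√p_k}, ℝ⁻)`: at each step it changes state and adds or
subtracts one generator `√pᵢ` (square roots of distinct primes). -/
structure RealCounterPBDC (σ : Type) where
  k : ℕ
  p : Fin k → ℕ
  p_prime : ∀ i, (p i).Prime
  p_inj : Function.Injective p
  Q : Type
  [finQ : Fintype Q]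
  q₀ : Q
  /-- transition: next state, together with the generator index and a flag
  (`true` = increment by `√pᵢ`, `false` = decrement by `√pᵢ`). -/
  δ : Q → σ → Q × (Fin k × Bool)
  accept : Set Q

namespace RealCounterPBDC

variable {σ : Type} (M : RealCounterPBDC σ)

/-- The real value added to the counter in one step. -/
noncomputable def incr (m : Fin M.k × Bool) : ℝ :=
  if m.2 then Real.sqrt (M.p m.1) else -Real.sqrt (M.p m.1)

/-- One step on a configuration (state, counter value). -/
noncomputable def step (c : M.Q × ℝ) (a : σ) : M.Q × ℝ :=
  ((M.δ c.1 a).1, c.2 + M.incr (M.δ c.1 a).2)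

/-- Configuration reached from the initial configuration after reading `x`. -/
noncomputable def run (x : List σ) : M.Q × ℝ :=
  x.foldl M.step (M.q₀, 0)

/-- Counter value after reading `x` from the start. -/
noncomputable def ctr (x : List σ) : ℝ := (M.run x).2

/-- `M` accepts `x` iff the counter stays nonnegative throughout (partial
blindness: otherwise the machine crashes), the final state is accepting, and
the final counter value is `0`. -/
noncomputable def language : Language σ :=
  { x | (∀ y, y <+: x → 0 ≤ M.ctr y) ∧ (M.run x).1 ∈ M.accept ∧ M.ctr x = 0 }

end RealCounterPBDC

/-!
Reading a loop `b` of the finite control after a safe word `a` cannot increase the counter: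
otherwise pumping `a bⁿ` keeps the word safe and makes the counter unbounded. Hence deleting such
a loop from a safe word keeps it safe, and repeating this writes the counter value of any safe
word as the value of a word shorter than `|Q|` plus a sum of negative gains of short words. Those
gains are bounded away from `0`, so only boundedly many fit into a nonnegative value: the safe
counter values form a finite set. The left quotient of the language by a safe word depends only
on the configuration it reaches, so there are finitely many left quotients (Myhill–Nerode).
-/

open scoped Pointwise

theorem Set.Finite.setOf_forall_mem_length_le {α : Type*} {s : Set α} (hs : s.Finite) (n : ℕ) :
    {l : List α | (∀ a ∈ l, a ∈ s) ∧ l.length ≤ n}.Finite := by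
  have := hs.to_subtype
  refine ((List.finite_length_le s n).image (List.map (↑))).subset ?_
  rintro l ⟨hl, hlen⟩
  exact ⟨l.attach.map fun a => ⟨a.1, hl _ a.2⟩, by simpa using hlen, by simp⟩

theorem DFA.eval_append {α σ : Type*} (A : DFA α σ) (x y : List α) :
    A.eval (x ++ y) = A.evalFrom (A.eval x) y :=
  A.evalFrom_of_append _ x y

/-- Elements of the closure are sums of elements of `D ⊆ (-∞, μ]`, and at most `c / -μ` of
them fit into a nonnegative value `s + t` with `s ≤ c`. -/
theorem Set.Finite.setOf_nonneg_mem_add_closure {S D : Set ℝ} (hS : S.Finite) (hD : D.Finite)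
    (hD_neg : ∀ d ∈ D, d < 0) :
    {v : ℝ | 0 ≤ v ∧ v ∈ S + (AddSubmonoid.closure D : Set ℝ)}.Finite := by
  obtain ⟨μ, hμ, hDμ⟩ : ∃ μ < 0, ∀ d ∈ D, d ≤ μ := by
    obtain ⟨μ, hμ, hmax⟩ :=
      Set.exists_max_image (insert (-1) D) id (hD.insert _) (Set.insert_nonempty _ _)
    refine ⟨μ, ?_, fun d hd => hmax d (Or.inr hd)⟩
    rcases hμ with rfl | hμ
    exacts [neg_one_lt_zero, hD_neg μ hμ]
  obtain ⟨c, hc⟩ := hS.bddAbove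
  obtain ⟨N, hN⟩ := exists_nat_ge (c / -μ)
  refine (hS.image2 (· + ·) ((hD.setOf_forall_mem_length_le N).image List.sum)).subset ?_
  rintro v ⟨hv, s, hs, t, ht, rfl⟩
  obtain ⟨l, hlD, rfl⟩ := AddSubmonoid.exists_list_of_mem_closure ht
  have hsum : l.sum ≤ l.length * μ := by
    simpa using l.sum_le_card_nsmul μ fun d hd => hDμ d (hlD d hd)
  have hlen : (l.length : ℝ) ≤ N := by
    refine le_trans ((le_div_iff₀ (neg_pos.2 hμ)).2 ?_) hN
    nlinarith [hc hs]
  exact ⟨s, hs, l.sum, ⟨l, ⟨hlD, by exact_mod_cast hlen⟩, rfl⟩, rfl⟩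

namespace RealCounterPBDC

variable {σ : Type} (M : RealCounterPBDC σ)

instance instFintypeQ : Fintype M.Q := M.finQ

def toDFA : DFA σ M.Q := ⟨fun q a => (M.δ q a).1, M.q₀, M.accept⟩

noncomputable def gain (q : M.Q) (w : List σ) : ℝ := (w.foldl M.step (q, 0)).2

def Safe (x : List σ) : Prop := ∀ y, y <+: x → 0 ≤ M.ctr y

/-- The language accepted from state `q` with counter value `v`. -/
noncomputable def languageFrom (q : M.Q) (v : ℝ) : Language σ :=
  {z | (∀ y, y <+: z → 0 ≤ v + M.gain q y) ∧ M.toDFA.evalFrom q z ∈ M.accept ∧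
    v + M.gain q z = 0}

variable {M}

theorem foldl_step (w : List σ) (q : M.Q) (v : ℝ) :
    w.foldl M.step (q, v) = (M.toDFA.evalFrom q w, v + M.gain q w) := by
  induction w generalizing q v with
  | nil => simp [gain]
  | cons a w ih =>
    have hgain : M.gain q (a :: w) = M.incr (M.δ q a).2 + M.gain (M.δ q a).1 w := by
      rw [gain, List.foldl_cons, step, ih, zero_add]
    rw [List.foldl_cons, step, ih, hgain, add_assoc]
    rfl

theorem run_eq (x : List σ) : M.run x = (M.toDFA.eval x, M.ctr x) := by
  rw [run, foldl_step, zero_add]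
  rfl

theorem ctr_append (x y : List σ) : M.ctr (x ++ y) = M.ctr x + M.gain (M.toDFA.eval x) y := by
  rw [ctr, run, List.foldl_append, ← run, run_eq, foldl_step]

theorem safe_append_iff {x z : List σ} :
    M.Safe (x ++ z) ↔ M.Safe x ∧ ∀ y, y <+: z → 0 ≤ M.ctr (x ++ y) := by
  refine ⟨fun h => ⟨fun y hy => h y (hy.trans (x.prefix_append z)), fun y hy =>
    h _ ((List.prefix_append_right_inj x).2 hy)⟩, fun ⟨hx, hz⟩ p hp => ?_⟩
  rcases List.prefix_or_prefix_of_prefix hp (x.prefix_append z) with hpx | ⟨t, rfl⟩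
  · exact hx p hpx
  · exact hz t ((List.prefix_append_right_inj x).1 hp)

theorem Safe.of_prefix {x y : List σ} (hx : M.Safe x) (hy : y <+: x) : M.Safe y :=
  fun z hz => hx z (hz.trans hy)

/-- Safety of a continuation only depends on the state and is monotone in the counter. -/
theorem Safe.append_of_le {x y z : List σ} (hxz : M.Safe (x ++ z)) (hy : M.Safe y)
    (hq : M.toDFA.eval y = M.toDFA.eval x) (hle : M.ctr x ≤ M.ctr y) : M.Safe (y ++ z) := by
  refine safe_append_iff.2 ⟨hy, fun z' hz' => ?_⟩
  have := (safe_append_iff.1 hxz).2 z' hz'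
  rw [ctr_append] at this ⊢
  rw [hq]
  linarith

theorem ctr_append_loop {a b c : List σ} (hloop : M.toDFA.eval (a ++ b) = M.toDFA.eval a) :
    M.ctr (a ++ b ++ c) = M.ctr (a ++ c) + M.gain (M.toDFA.eval a) b := by
  rw [ctr_append, hloop, ctr_append, ctr_append]
  ring

variable (M) in
def negativeGains (n : ℕ) : Set ℝ :=
  Set.image2 M.gain Set.univ {w | w.length ≤ n} ∩ Set.Iio 0

theorem finite_negativeGains [Finite σ] (n : ℕ) : (M.negativeGains n).Finite :=
  ((Set.finite_univ (α := M.Q)).image2 M.gain (List.finite_length_le σ n)).inter_of_left _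

theorem gain_mem_closure_negativeGains {q : M.Q} {w : List σ} {n : ℕ} (hw : w.length ≤ n)
    (hgain : M.gain q w ≤ 0) : M.gain q w ∈ AddSubmonoid.closure (M.negativeGains n) := by
  rcases hgain.lt_or_eq with hneg | hzero
  · exact AddSubmonoid.subset_closure ⟨⟨q, trivial, w, hw, rfl⟩, hneg⟩
  · rw [hzero]
    exact zero_mem _

section Bounded

variable {α : ℝ} (hbdd : ∀ x, M.Safe x → M.ctr x ≤ α)
include hbdd

/-- Pumping a loop of positive gain would make the counter unbounded. -/
theorem gain_nonpos_of_loop {a b : List σ} (hloop : M.toDFA.eval (a ++ b) = M.toDFA.eval a)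
    (hab : M.Safe (a ++ b)) : M.gain (M.toDFA.eval a) b ≤ 0 := by
  by_contra! hd
  set d := M.gain (M.toDFA.eval a) b
  have hpump : ∀ n : ℕ, ∃ u, M.Safe u ∧ M.toDFA.eval u = M.toDFA.eval a ∧
      M.ctr u = M.ctr a + n * d := by
    intro n
    induction n with
    | zero => exact ⟨a, hab.of_prefix (a.prefix_append b), rfl, by simp⟩
    | succ n ih =>
      obtain ⟨u, hu, hq, hctr⟩ := ih
      refine ⟨u ++ b, hab.append_of_le hu hq ?_, ?_, ?_⟩
      · rw [hctr]
        exact le_add_of_nonneg_right (mul_nonneg n.cast_nonneg hd.le)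
      · rw [DFA.eval_append, hq, ← DFA.eval_append, hloop]
      · rw [ctr_append, hq, hctr]
        push_cast
        ring
  obtain ⟨n, hn⟩ := exists_nat_gt ((α - M.ctr a) / d)
  obtain ⟨u, hu, -, hctr⟩ := hpump n
  have := hbdd u hu
  rw [div_lt_iff₀ hd] at hn
  linarith

theorem Safe.delete_loop {a b c : List σ} (hloop : M.toDFA.eval (a ++ b) = M.toDFA.eval a)
    (habc : M.Safe (a ++ b ++ c)) : M.Safe (a ++ c) := by
  have hab := habc.of_prefix ((a ++ b).prefix_append c)
  refine habc.append_of_le (hab.of_prefix (a.prefix_append b)) hloop.symm ?_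
  rw [ctr_append]
  linarith [gain_nonpos_of_loop hbdd hloop hab]

/-- Proved by deleting loops until the word is shorter than `|Q|`. -/
theorem ctr_mem_add_closure {x : List σ} (hx : M.Safe x) :
    M.ctr x ∈ M.ctr '' {y | y.length ≤ Fintype.card M.Q} +
      (AddSubmonoid.closure (M.negativeGains (Fintype.card M.Q)) : Set ℝ) := by
  induction hn : x.length using Nat.strong_induction_on generalizing x with
  | _ n ih =>
  by_cases hlen : x.length ≤ Fintype.card M.Q
  · simpa using Set.add_mem_add
      (Set.mem_image_of_mem M.ctr (show x ∈ {y | y.length ≤ _} from hlen))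
      (zero_mem (AddSubmonoid.closure (M.negativeGains _)))
  obtain ⟨q, a, b, c, rfl, hab, hb, rfl, hloop, -⟩ :=
    M.toDFA.evalFrom_split (x := x) (t := M.toDFA.eval x) (by omega) rfl
  have hloop' : M.toDFA.eval (a ++ b) = M.toDFA.eval a := by
    rw [DFA.eval_append]
    exact hloop
  obtain ⟨s, hs, t, ht, hst⟩ := ih (a ++ c).length
    (by rw [← hn]; simp [List.length_pos_iff.2 hb]) (hx.delete_loop hbdd hloop') rfl
  have hgain := gain_mem_closure_negativeGains (n := Fintype.card M.Q) (by omega)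
    (gain_nonpos_of_loop hbdd hloop' (hx.of_prefix ((a ++ b).prefix_append c)))
  rw [ctr_append_loop hloop', ← hst, add_assoc]
  exact Set.add_mem_add hs (add_mem ht hgain)

theorem finite_ctr_safe [Finite σ] : (M.ctr '' {x | M.Safe x}).Finite := by
  refine (Set.Finite.setOf_nonneg_mem_add_closure
    ((List.finite_length_le σ (Fintype.card M.Q)).image M.ctr)
    (M.finite_negativeGains (Fintype.card M.Q)) fun d hd => hd.2).subset ?_
  rintro _ ⟨x, hx, rfl⟩
  exact ⟨hx x (List.prefix_refl x), ctr_mem_add_closure hbdd hx⟩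

end Bounded

theorem leftQuotient_language_of_safe {x : List σ} (hx : M.Safe x) :
    M.language.leftQuotient x = M.languageFrom (M.toDFA.eval x) (M.ctr x) := by
  ext z
  change M.Safe (x ++ z) ∧ (M.run (x ++ z)).1 ∈ M.accept ∧ M.ctr (x ++ z) = 0 ↔ _
  simp only [safe_append_iff, run_eq, DFA.eval_append, ctr_append, hx, true_and]
  rfl

theorem leftQuotient_language_of_not_safe {x : List σ} (hx : ¬M.Safe x) :
    M.language.leftQuotient x = 0 := by
  ext z
  exact iff_of_false (fun hz => hx (safe_append_iff.1 hz.1).1) (Language.notMem_zero z)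

end RealCounterPBDC

theorem bounded_counter_implies_regular
    {σ : Type} [Fintype σ] (M : RealCounterPBDC σ) (α : ℝ)
    (hbdd : ∀ x : List σ, (∀ y, y <+: x → 0 ≤ M.ctr y) → M.ctr x ≤ α) :
    M.language.IsRegular := by
  refine Language.IsRegular.of_finite_range_leftQuotient <|
    (((Set.finite_univ.prod (M.finite_ctr_safe hbdd)).image
      fun c => M.languageFrom c.1 c.2).insert 0).subset ?_
  rintro _ ⟨x, rfl⟩
  by_cases hx : M.Safe x
  · exact Or.inr ⟨(M.toDFA.eval x, M.ctr x), ⟨trivial, x, hx, rfl⟩,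
      (M.leftQuotient_language_of_safe hx).symm⟩
  · exact Or.inl (M.leftQuotient_language_of_not_safe hx)
end
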